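/- Starting from any valid instance and executing the spanning forest primitive of the Universal Coating algorithm, within O(n) asynchronous rounds every particle has left the idle state and the particles form a spanning forest (every particle is a root adjacent to the object or a retired particle, or a follower whose parent pointer leads toward such a root). In particular, in every round at least one idle particle becomes active, so at most n rounds are needed until all n particles have joined the spanning forest. -/

import Mathlib

/-!
The idle particles only shrink. Since particles and object together are connected, a walk from
an idle particle to the object leaves the idle particles somewhere, and the idle particle at that
step is adjacent to the object or to an active particle, so it is activated in the next round.
Hence the idle set shrinks strictly every round while nonempty, and is empty after `n` rounds.
-/

/-- Nodes of the infinite regular triangular grid, realized on `ℤ × ℤ`. -/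
abbrev Node : Type := ℤ × ℤ

/-- The infinite regular triangular grid graph `G_eqt`. -/
def Geqt : SimpleGraph Node :=
  SimpleGraph.fromRel (fun u v =>
    (v.1 - u.1, v.2 - u.2) ∈ ({(1, 0), (0, 1), (1, -1)} : Set (ℤ × ℤ)))

/-- Graph distance in the triangular grid. -/
noncomputable def gdist (u v : Node) : ℕ := Geqt.dist u v

/-- Distance from a node to a set of nodes. -/
noncomputable def gdistSet (v : Node) (U : Set Node) : ℕ := sInf (gdist v '' U)

/-- A coating instance: the initial (contracted) particle positions and an object. -/
structure Instance where
  particles : Set Node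
  object : Set Node

/-- Layer `i`: the set of nodes at distance `i` from the object. -/
def layer (O : Set Node) (i : ℕ) : Set Node := {v | gdistSet v O = i}

/-- `B O i` is the number of nodes in layer `i`. -/
noncomputable def B (O : Set Node) (i : ℕ) : ℕ := (layer O i).ncard

/-- The subgraph of `G_eqt` induced by `S` is connected. -/
def connectedSet (S : Set Node) : Prop := (Geqt.induce S).Connected

/-- `S` is `k`-connected: removing fewer than `k` nodes leaves it connected. -/
def kConnectedSet (k : ℕ) (S : Set Node) : Prop :=
  ∀ D : Set Node, D ⊆ S → D.Finite → D.ncard < k → connectedSet (S \ D)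

/-- A valid instance for the universal coating problem: finitely many particles,
all initially contracted (and idle), a single connected object, the particle
system connected to the object, no holes in the object, and no narrow tunnels. -/
def ValidInstance (I : Instance) : Prop :=
  I.particles.Finite ∧ I.particles.Nonempty ∧
  I.particles ∩ I.object = ∅ ∧
  connectedSet I.object ∧
  connectedSet (I.particles ∪ I.object) ∧
  connectedSet I.objectᶜ ∧
  kConnectedSet (2 * (⌈(I.particles.ncard : ℚ) / (B I.object 1 : ℚ)⌉₊ + 1)) I.objectᶜ

/-- A set of occupied nodes is a legal coating configuration: every unoccupied
non-object node is at least as far from the object as every occupied node. -/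
def legal (I : Instance) (S : Set Node) : Prop :=
  ∀ v, v ∉ I.object → v ∉ S → ∀ w ∈ S, gdistSet w I.object ≤ gdistSet v I.object

/-- The particles of an instance, as a type. -/
abbrev Pt (I : Instance) : Type := {v : Node // v ∈ I.particles}

/-- The states a particle can have during the spanning forest primitive
(no particle is retired during this phase). -/
inductive PState : Type
  | idle | follower | root
deriving DecidableEq

theorem SimpleGraph.exists_adj_mem_of_connected_induce {V : Type*} {G : SimpleGraph V}
    {S T : Set V} (hS : (G.induce S).Connected) {a b : V} (ha : a ∈ S) (haT : a ∉ T)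
    (hb : b ∈ S) (hbT : b ∈ T) : ∃ u ∈ S, u ∉ T ∧ ∃ v ∈ T, G.Adj u v := by
  obtain ⟨w⟩ := hS.preconnected ⟨a, ha⟩ ⟨b, hb⟩
  obtain ⟨d, -, hd, hd'⟩ := w.exists_boundary_dart {x | x.1 ∉ T} haT (not_not.mpr hbT)
  exact ⟨d.fst.1, d.fst.2, hd, d.snd.1, not_not.mp hd', d.adj⟩

theorem Set.eq_empty_of_card_le_of_ssubset {α : Type*} [Finite α] {S : ℕ → Set α}
    (hanti : ∀ i, S (i + 1) ⊆ S i) (hstrict : ∀ i, (S i).Nonempty → S (i + 1) ≠ S i)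
    {i : ℕ} (hi : Nat.card α ≤ i) : S i = ∅ := by
  have hcard : ∀ i, (S i).ncard ≤ Nat.card α - i := by
    intro i
    induction i with
    | zero => exact ncard_le_card _
    | succ i ih =>
      rcases (S i).eq_empty_or_nonempty with hempty | hne
      · simp [subset_empty_iff.mp (hempty ▸ hanti i)]
      · have := ncard_lt_ncard ((hanti i).ssubset_of_ne (hstrict i hne))
        omega
  exact (ncard_eq_zero (toFinite _)).mp (by have := hcard i; omega)

theorem exists_idle_adj_object_or_active (I : Instance) (hdisj : I.particles ∩ I.object = ∅)
    (hobj : I.object.Nonempty) (hconn : connectedSet (I.particles ∪ I.object))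
    (state : Pt I → PState) (hidle : ∃ p, state p = PState.idle) :
    ∃ p, state p = PState.idle ∧ ((∃ o ∈ I.object, Geqt.Adj p.1 o) ∨
      ∃ q, Geqt.Adj p.1 q.1 ∧ state q ≠ PState.idle) := by
  set T : Set Node := I.object ∪ {v | ∃ q : Pt I, q.1 = v ∧ state q ≠ PState.idle}
  obtain ⟨p, hp⟩ := hidle
  obtain ⟨o, ho⟩ := hobj
  have hpT : p.1 ∉ T := by
    rintro (hpo | ⟨q, hqp, hq⟩)
    · exact (Set.eq_empty_iff_forall_notMem.mp hdisj) p.1 ⟨p.2, hpo⟩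
    · exact hq (Subtype.ext hqp ▸ hp)
  obtain ⟨u, hu, huT, v, hvT, huv⟩ :=
    Geqt.exists_adj_mem_of_connected_induce hconn (Or.inl p.2) hpT (Or.inr ho) (Or.inl ho)
  have hu : u ∈ I.particles := hu.resolve_right fun h => huT (Or.inl h)
  refine ⟨⟨u, hu⟩, by_contra fun h => huT (Or.inr ⟨⟨u, hu⟩, rfl, h⟩), ?_⟩
  rcases hvT with hvo | ⟨q, rfl, hq⟩
  · exact Or.inl ⟨v, hvo, huv⟩
  · exact Or.inr ⟨q, huv, hq⟩

theorem stmt8_general (I : Instance) (hI : ValidInstance I)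
    (state : ℕ → Pt I → PState) (par : ℕ → Pt I → Option (Pt I))
    (hmonotone : ∀ i p, state i p ≠ PState.idle → state (i + 1) p ≠ PState.idle)
    (hactivate : ∀ i p,
      ((∃ o ∈ I.object, Geqt.Adj p.1 o) ∨
        ∃ q, Geqt.Adj p.1 q.1 ∧ state i q ≠ PState.idle) →
      state (i + 1) p ≠ PState.idle)
    (hroot : ∀ i p, state i p = PState.root → ∃ o ∈ I.object, Geqt.Adj p.1 o)
    (hfollower : ∀ i p, state i p = PState.follower →
      ∃ q, par i p = some q ∧ Geqt.Adj p.1 q.1 ∧ state i q ≠ PState.idle) :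
    (∀ i, (∃ p, state i p = PState.idle) →
      ∃ p, state i p = PState.idle ∧ state (i + 1) p ≠ PState.idle) ∧
    (∀ i, I.particles.ncard ≤ i → ∀ p,
      (state i p = PState.root ∧ ∃ o ∈ I.object, Geqt.Adj p.1 o) ∨
      (state i p = PState.follower ∧
        ∃ q, par i p = some q ∧ Geqt.Adj p.1 q.1 ∧ state i q ≠ PState.idle)) := by
  obtain ⟨hfin, -, hdisj, hobjconn, hconn, -⟩ := hI
  have : Finite (Pt I) := hfin.to_subtype
  have hobj : I.object.Nonempty := by
    obtain ⟨⟨o, ho⟩⟩ := hobjconn.nonempty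
    exact ⟨o, ho⟩
  have progress : ∀ i, (∃ p, state i p = PState.idle) →
      ∃ p, state i p = PState.idle ∧ state (i + 1) p ≠ PState.idle := by
    intro i hidle
    obtain ⟨p, hp, hadj⟩ := exists_idle_adj_object_or_active I hdisj hobj hconn (state i) hidle
    exact ⟨p, hp, hactivate i p hadj⟩
  refine ⟨progress, fun i hi p => ?_⟩
  have hidle_empty : {q : Pt I | state i q = PState.idle} = ∅ := by
    refine Set.eq_empty_of_card_le_of_ssubset (S := fun j => {q | state j q = PState.idle})
      (fun j q hq => ?_) (fun j hne heq => ?_) (by rwa [Nat.card_coe_set_eq])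
    · by_contra h
      exact hmonotone j q h hq
    · obtain ⟨q, hq, hq'⟩ := progress j hne
      exact hq' (heq.symm ▸ hq : q ∈ {q : Pt I | state (j + 1) q = PState.idle})
  have hp : state i p ≠ PState.idle := fun h => hidle_empty.subset h
  cases hst : state i p with
  | idle => exact absurd hst hp
  | root => exact Or.inl ⟨rfl, hroot i p hst⟩
  | follower => exact Or.inr ⟨rfl, hfollower i p hst⟩

/-- Starting from any valid instance and executing the
spanning forest primitive of the Universal Coating algorithm — an idle
particle becomes a root when it is adjacent to the object, becomes a follower
with a parent pointer to a root or follower neighbor when it has one, and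
stays idle otherwise; each round every particle is activated at least once —
within `O(n)` asynchronous rounds every particle has left the idle state and
the particles form a spanning forest: every particle is a root adjacent to
the object, or a follower whose (acyclic) parent pointer leads toward such a
root.  In particular, in every round at least one idle particle becomes
active, so at most `n` rounds are needed until all `n` particles have joined
the spanning forest. -/
theorem stmt8 (I : Instance) (hI : ValidInstance I)
    (state : ℕ → Pt I → PState) (par : ℕ → Pt I → Option (Pt I))
    (h0 : ∀ p, state 0 p = PState.idle)
    (hmonotone : ∀ i p, state i p ≠ PState.idle → state (i + 1) p ≠ PState.idle)
    (hactivate : ∀ i p,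
      ((∃ o ∈ I.object, Geqt.Adj p.1 o) ∨
        ∃ q, Geqt.Adj p.1 q.1 ∧ state i q ≠ PState.idle) →
      state (i + 1) p ≠ PState.idle)
    (hidle : ∀ i p, state (i + 1) p ≠ PState.idle →
      state i p ≠ PState.idle ∨ (∃ o ∈ I.object, Geqt.Adj p.1 o) ∨
        ∃ q, Geqt.Adj p.1 q.1 ∧ state i q ≠ PState.idle)
    (hroot : ∀ i p, state i p = PState.root → ∃ o ∈ I.object, Geqt.Adj p.1 o)
    (hfollower : ∀ i p, state i p = PState.follower →
      ∃ q, par i p = some q ∧ Geqt.Adj p.1 q.1 ∧ state i q ≠ PState.idle)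
    (hforest : ∀ i, ∃ rank : Pt I → ℕ, ∀ p q, par i p = some q → rank p < rank q) :
    (∀ i, (∃ p, state i p = PState.idle) →
      ∃ p, state i p = PState.idle ∧ state (i + 1) p ≠ PState.idle) ∧
    (∀ i, I.particles.ncard ≤ i → ∀ p,
      (state i p = PState.root ∧ ∃ o ∈ I.object, Geqt.Adj p.1 o) ∨
      (state i p = PState.follower ∧
        ∃ q, par i p = some q ∧ Geqt.Adj p.1 q.1 ∧ state i q ≠ PState.idle)) :=
  stmt8_general I hI state par hmonotone hactivate hroot hfollower
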